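/- For every real x > 0 with x ≠ 1 and every real p with p < 0 or p > 1, one has Ĝ_p(x,1) ≤ K(x)^{-p(1-p)} · W_p(x,1), where K is the Kantorovich constant. -/

import Mathlib

/-!
Put `x = exp (2 * s)` and `φ(t) = sinh (t * s) / (t * sinh s)`. Then `Ĝ_p(x,1) = e ^ s / φ(p)`,
`W_p(x,1) = e ^ s / (φ(p) * φ(1 - p))` and `K(x) = cosh s ^ 2`, so the claim reduces to
`φ(1 - p) ≤ cosh s ^ (2 * p * (p - 1))`, an exponent that is nonnegative for `p ∉ [0, 1]` and
always at least `(1 - p) ^ 2 - 1`. As `φ` is even, it suffices to take `t ≥ 0`.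
For `t ≤ 1`, `sinh (t * s) ≤ t * sinh s` gives `φ(t) ≤ 1`. For `t ≥ 1`,
`φ(t) ≤ cosh s ^ (t ^ 2 - 1)` follows by comparing logarithmic derivatives in `t`, i.e. from
`s * coth (t * s) ≤ 1 / t + 2 * t * log (cosh s)`. When `log (cosh s) < 1 / 2` this comes from
`u * coth u ≤ 1 + u ^ 2 / 3` and `s ^ 2 ≤ 6 * log (cosh s)`; otherwise from `coth` decreasing
and `s * coth s ≤ 1 + 2 * log (cosh s)`.
-/

open Real Set

theorem monotoneOn_Ici_of_hasDerivAt_nonneg {f f' : ℝ → ℝ} {a : ℝ}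
    (hf : ∀ x, a ≤ x → HasDerivAt f (f' x) x) (hf' : ∀ x, a < x → 0 ≤ f' x) :
    MonotoneOn f (Ici a) :=
  monotoneOn_of_hasDerivWithinAt_nonneg (convex_Ici a)
    (fun x hx => (hf x hx).continuousAt.continuousWithinAt)
    (fun x hx => by
      rw [interior_Ici] at hx
      exact (hf x (le_of_lt hx)).hasDerivWithinAt)
    (fun x hx => by
      rw [interior_Ici] at hx
      exact hf' x hx)

theorem nonneg_of_hasDerivAt_nonneg {f f' : ℝ → ℝ} (hf : ∀ x, HasDerivAt f (f' x) x)
    (h₀ : f 0 = 0) (hf' : ∀ x, 0 < x → 0 ≤ f' x) {s : ℝ} (hs : 0 ≤ s) : 0 ≤ f s :=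
  h₀ ▸ monotoneOn_Ici_of_hasDerivAt_nonneg (fun x _ => hf x) hf' self_mem_Ici hs hs

theorem sinh_le_mul_cosh {s : ℝ} (hs : 0 ≤ s) : sinh s ≤ s * cosh s := by
  have h := nonneg_of_hasDerivAt_nonneg (f := fun s => s * cosh s - sinh s)
    (fun x => by
      refine (((hasDerivAt_id' x).mul (hasDerivAt_cosh x)).sub (hasDerivAt_sinh x)).congr_deriv ?_
      simp) (by simp) (fun x hx => mul_nonneg hx.le (sinh_nonneg_iff.2 hx.le)) hs
  simpa using h

theorem one_add_sq_div_two_le_cosh {s : ℝ} (hs : 0 ≤ s) : 1 + s ^ 2 / 2 ≤ cosh s := by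
  have h := cosh_two_mul (s / 2)
  rw [mul_div_cancel₀ s two_ne_zero, cosh_sq'] at h
  nlinarith [self_le_sinh_iff.2 (by positivity : (0:ℝ) ≤ s / 2)]

theorem sq_div_two_add_sq_le_log_cosh {s : ℝ} (hs : 0 ≤ s) :
    s ^ 2 / (2 + s ^ 2) ≤ log (cosh s) := by
  have hc := one_add_sq_div_two_le_cosh hs
  calc s ^ 2 / (2 + s ^ 2) = 1 - (1 + s ^ 2 / 2)⁻¹ := by field_simp; ring
    _ ≤ 1 - (cosh s)⁻¹ := by gcongr
    _ ≤ log (cosh s) := one_sub_inv_le_log_of_pos (cosh_pos s)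

theorem mul_sinh_div_two_mul_cosh_le_log_cosh {s : ℝ} (hs : 0 ≤ s) :
    s * sinh s / (2 * cosh s) ≤ log (cosh s) := by
  have h := nonneg_of_hasDerivAt_nonneg
    (f := fun s => log (cosh s) - s * sinh s / (2 * cosh s))
    (f' := fun s => (sinh s * cosh s - s) / (2 * cosh s ^ 2))
    (fun x => by
      have hc := cosh_pos x
      refine (((hasDerivAt_cosh x).log hc.ne').sub
        (((hasDerivAt_id' x).mul (hasDerivAt_sinh x)).div
          ((hasDerivAt_cosh x).const_mul 2) (by positivity))).congr_deriv ?_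
      dsimp only [Pi.mul_apply]
      field_simp
      linear_combination -x * cosh_sq x)
    (by simp) (fun x hx => by
      have := self_le_sinh_iff.2 hx.le
      have := one_le_cosh x
      have : 0 ≤ sinh x * cosh x - x := by nlinarith
      positivity) hs
  simpa using h

theorem mul_cosh_le_sinh_mul_one_add_two_mul_log_cosh {s : ℝ} (hs : 0 ≤ s) :
    s * cosh s ≤ sinh s * (1 + 2 * log (cosh s)) := by
  have h := nonneg_of_hasDerivAt_nonneg
    (f := fun s => sinh s * (1 + 2 * log (cosh s)) - s * cosh s)
    (f' := fun s => 2 * cosh s * log (cosh s) + 2 * sinh s ^ 2 / cosh s - s * sinh s)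
    (fun x => by
      have hc := cosh_pos x
      refine (((hasDerivAt_sinh x).mul
          ((((hasDerivAt_cosh x).log hc.ne').const_mul 2).const_add 1)).sub
        ((hasDerivAt_id' x).mul (hasDerivAt_cosh x))).congr_deriv ?_
      field_simp
      ring)
    (by simp) (fun x hx => by
      have hc := cosh_pos x
      have hL := mul_sinh_div_two_mul_cosh_le_log_cosh hx.le
      rw [div_le_iff₀ (by positivity)] at hL
      have : 0 ≤ 2 * sinh x ^ 2 / cosh x := by positivity
      nlinarith) hs
  simpa using h

theorem three_mul_self_mul_cosh_le {s : ℝ} (hs : 0 ≤ s) :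
    3 * (s * cosh s) ≤ (3 + s ^ 2) * sinh s := by
  have h := nonneg_of_hasDerivAt_nonneg
    (f := fun s => (3 + s ^ 2) * sinh s - 3 * (s * cosh s))
    (f' := fun s => s * (s * cosh s - sinh s))
    (fun x => by
      refine ((((hasDerivAt_pow 2 x).const_add 3).mul (hasDerivAt_sinh x)).sub
        (((hasDerivAt_id' x).mul (hasDerivAt_cosh x)).const_mul 3)).congr_deriv ?_
      ring)
    (by simp) (fun x hx => mul_nonneg hx.le (by linarith [sinh_le_mul_cosh hx.le])) hs
  simpa using h

theorem sinh_mul_le_mul_sinh {s t : ℝ} (hs : 0 ≤ s) (ht₀ : 0 ≤ t) (ht₁ : t ≤ 1) :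
    sinh (t * s) ≤ t * sinh s := by
  have h := nonneg_of_hasDerivAt_nonneg
    (f := fun s => t * sinh s - sinh (t * s))
    (f' := fun s => t * (cosh s - cosh (t * s)))
    (fun x => by
      refine (((hasDerivAt_sinh x).const_mul t).sub
        (((hasDerivAt_id' x).const_mul t).sinh)).congr_deriv ?_
      ring)
    (by simp) (fun x hx => by
      have : cosh (t * x) ≤ cosh x := by
        rw [cosh_le_cosh, abs_of_nonneg hx.le, abs_of_nonneg (by positivity)]
        nlinarith
      nlinarith) hs
  simpa using h

theorem mul_cosh_mul_div_sinh_mul_le {s t : ℝ} (hs : 0 < s) (ht : 1 ≤ t) :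
    s * cosh (t * s) / sinh (t * s) ≤ 1 / t + 2 * t * log (cosh s) := by
  have ht₀ : 0 < t := one_pos.trans_le ht
  have hts : 0 < sinh (t * s) := sinh_pos_iff.2 (by positivity)
  set L := log (cosh s)
  rcases le_or_gt 1 (2 * L) with hL | hL
  · have hS : 0 < sinh s := sinh_pos_iff.2 hs
    have hcoth : cosh (t * s) * sinh s ≤ sinh (t * s) * cosh s := by
      have := sinh_nonneg_iff.2 (by nlinarith : 0 ≤ t * s - s)
      rw [sinh_sub] at this
      linarith
    calc s * cosh (t * s) / sinh (t * s) ≤ s * cosh s / sinh s := by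
          rw [div_le_div_iff₀ hts hS]
          nlinarith
      _ ≤ 1 + 2 * L := by
          rw [div_le_iff₀ hS]
          linarith [mul_cosh_le_sinh_mul_one_add_two_mul_log_cosh hs.le]
      _ ≤ 1 / t + 2 * t * L := by
          have hinv : t * (1 / t) = 1 := mul_one_div_cancel ht₀.ne'
          have : 1 / t ≤ 1 := (div_le_one ht₀).2 ht
          nlinarith [mul_nonneg (sub_nonneg.2 ht) (sub_nonneg.2 (this.trans hL))]
  · have hsL : s ^ 2 ≤ 6 * L := by
      have := sq_div_two_add_sq_le_log_cosh hs.le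
      rw [div_le_iff₀ (by positivity)] at this
      nlinarith
    calc s * cosh (t * s) / sinh (t * s) ≤ 1 / t + t * s ^ 2 / 3 := by
          rw [div_le_iff₀ hts]
          calc s * cosh (t * s) = 3 * (t * s * cosh (t * s)) / (3 * t) := by field_simp
            _ ≤ (3 + (t * s) ^ 2) * sinh (t * s) / (3 * t) :=
                div_le_div_of_nonneg_right (three_mul_self_mul_cosh_le (mul_pos ht₀ hs).le)
                  (by positivity)
            _ = (1 / t + t * s ^ 2 / 3) * sinh (t * s) := by field_simp
      _ ≤ 1 / t + 2 * t * L := by nlinarith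

theorem sinh_mul_le_rpow_cosh_mul {s t : ℝ} (hs : 0 < s) (ht : 1 ≤ t) :
    sinh (t * s) ≤ cosh s ^ (t ^ 2 - 1) * (t * sinh s) := by
  set L := log (cosh s)
  have hG : MonotoneOn (fun u => (u ^ 2 - 1) * L + log u - log (sinh (u * s))) (Ici 1) := by
    refine monotoneOn_Ici_of_hasDerivAt_nonneg
      (f' := fun u => 2 * u * L + 1 / u - s * cosh (u * s) / sinh (u * s)) (fun u hu => ?_)
      (fun u hu => sub_nonneg.2 ((mul_cosh_mul_div_sinh_mul_le hs hu.le).trans_eq (add_comm _ _)))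
    have hu : 0 < u := one_pos.trans_le hu
    have hus : sinh (u * s) ≠ 0 := (sinh_pos_iff.2 (mul_pos hu hs)).ne'
    refine (((((hasDerivAt_pow 2 u).sub_const 1).mul_const L).add (hasDerivAt_log hu.ne')).sub
      (((hasDerivAt_id' u).mul_const s).sinh.log hus)).congr_deriv ?_
    field_simp
    ring
  have hlog := hG self_mem_Ici ht ht
  simp only [one_pow, sub_self, zero_mul, log_one, add_zero, zero_sub, one_mul] at hlog
  have ht₀ : 0 < t := one_pos.trans_le ht
  have hS : 0 < sinh s := sinh_pos_iff.2 hs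
  rw [← log_le_log_iff (sinh_pos_iff.2 (mul_pos ht₀ hs)) (by positivity),
    log_mul (by positivity) (by positivity), log_rpow (cosh_pos s), log_mul ht₀.ne' hS.ne']
  linarith

noncomputable def sinhRatio (s t : ℝ) : ℝ := sinh (t * s) / (t * sinh s)

theorem sinhRatio_abs_abs (s t : ℝ) : sinhRatio |s| |t| = sinhRatio s t := by
  unfold sinhRatio
  rcases abs_choice s with hs | hs <;> rcases abs_choice t with ht | ht <;>
    simp only [hs, ht, neg_mul, mul_neg, neg_neg, sinh_neg, div_neg, neg_div]

theorem sinhRatio_pos {s t : ℝ} (hs : s ≠ 0) (ht : t ≠ 0) : 0 < sinhRatio s t := by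
  rw [← sinhRatio_abs_abs]
  have hs' := abs_pos.2 hs
  have ht' := abs_pos.2 ht
  have := sinh_pos_iff.2 hs'
  have := sinh_pos_iff.2 (mul_pos ht' hs')
  unfold sinhRatio
  positivity

theorem sinhRatio_le_rpow_cosh {s t E : ℝ} (hE₀ : 0 ≤ E) (hE : t ^ 2 - 1 ≤ E) :
    sinhRatio s t ≤ cosh s ^ E := by
  have hC : 1 ≤ cosh |s| ^ E := one_le_rpow (one_le_cosh _) hE₀
  rw [← sinhRatio_abs_abs, ← cosh_abs]
  rcases (abs_nonneg s).eq_or_lt with hs | hs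
  · simp [sinhRatio, ← hs]
  rcases (abs_nonneg t).eq_or_lt with ht | ht
  · simp [sinhRatio, ← ht]
    positivity
  have hS := sinh_pos_iff.2 hs
  rw [sinhRatio, div_le_iff₀ (by positivity)]
  rcases le_total |t| 1 with ht₁ | ht₁
  · exact (sinh_mul_le_mul_sinh hs.le ht.le ht₁).trans (le_mul_of_one_le_left (by positivity) hC)
  · refine (sinh_mul_le_rpow_cosh_mul hs ht₁).trans
      (mul_le_mul_of_nonneg_right ?_ (by positivity))
    exact rpow_le_rpow_of_exponent_le (one_le_cosh _) (by rwa [sq_abs])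

theorem exp_two_mul_sub_one (y : ℝ) : exp (2 * y) - 1 = 2 * exp y * sinh y := by
  rw [sinh_eq, two_mul, exp_add, exp_neg]
  field_simp

theorem exp_two_mul_add_one (y : ℝ) : exp (2 * y) + 1 = 2 * exp y * cosh y := by
  rw [cosh_eq, two_mul, exp_add, exp_neg]
  field_simp

theorem exp_two_mul_rpow_sub_one (s a : ℝ) :
    exp (2 * s) ^ a - 1 = 2 * exp (a * s) * sinh (a * s) := by
  rw [← exp_mul, ← exp_two_mul_sub_one]
  ring_nf

theorem hatG_exp_two_mul {s p : ℝ} (hs : s ≠ 0) (hp : p ≠ 0) :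
    p * exp (2 * s) ^ (p / 2) * (exp (2 * s) - 1) / (exp (2 * s) ^ p - 1) =
      exp s / sinhRatio s p := by
  have hS : sinh s ≠ 0 := sinh_ne_zero.2 hs
  have hpS : sinh (p * s) ≠ 0 := sinh_ne_zero.2 (mul_ne_zero hp hs)
  rw [← exp_mul, exp_two_mul_rpow_sub_one, exp_two_mul_sub_one, sinhRatio,
    show 2 * s * (p / 2) = p * s by ring]
  field_simp

theorem wyd_exp_two_mul {s p : ℝ} (hs : s ≠ 0) (hp₀ : p ≠ 0) (hp₁ : 1 - p ≠ 0) :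
    p * (1 - p) * (exp (2 * s) - 1) ^ 2 / ((exp (2 * s) ^ p - 1) * (exp (2 * s) ^ (1 - p) - 1)) =
      exp s / (sinhRatio s p * sinhRatio s (1 - p)) := by
  have hS : sinh s ≠ 0 := sinh_ne_zero.2 hs
  have hpS : sinh (p * s) ≠ 0 := sinh_ne_zero.2 (mul_ne_zero hp₀ hs)
  have hqS : sinh ((1 - p) * s) ≠ 0 := sinh_ne_zero.2 (mul_ne_zero hp₁ hs)
  have hexp : exp (p * s) * exp ((1 - p) * s) = exp s := by rw [← exp_add]; ring_nf
  rw [exp_two_mul_rpow_sub_one, exp_two_mul_rpow_sub_one, exp_two_mul_sub_one, sinhRatio,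
    sinhRatio]
  field_simp
  linear_combination -hexp

theorem kantorovich_exp_two_mul (s : ℝ) :
    (exp (2 * s) + 1) ^ 2 / (4 * exp (2 * s)) = cosh s ^ 2 := by
  rw [exp_two_mul_add_one, two_mul s, exp_add]
  field_simp
  ring

theorem hatG_le_kantorovich_wyd (x p : ℝ) (hx : 0 < x) (hx1 : x ≠ 1)
    (hp : p < 0 ∨ 1 < p) :
    p * x ^ (p / 2) * (x - 1) / (x ^ p - 1) ≤
      ((x + 1) ^ 2 / (4 * x)) ^ (-(p * (1 - p))) *
        (p * (1 - p) * (x - 1) ^ 2 / ((x ^ p - 1) * (x ^ (1 - p) - 1))) := by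
  obtain ⟨s, rfl⟩ : ∃ s, x = exp (2 * s) :=
    ⟨log x / 2, by rw [mul_div_cancel₀ _ two_ne_zero, exp_log hx]⟩
  have hs : s ≠ 0 := by rintro rfl; simp at hx1
  have hp₀ : p ≠ 0 := by rintro rfl; norm_num at hp
  have hp₁ : 1 - p ≠ 0 := by rcases hp with h | h <;> linarith
  have hE₀ : 0 ≤ (2 : ℕ) * -(p * (1 - p)) := by push_cast; rcases hp with h | h <;> nlinarith
  rw [hatG_exp_two_mul hs hp₀, wyd_exp_two_mul hs hp₀ hp₁, kantorovich_exp_two_mul,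
    ← rpow_natCast, ← rpow_mul (cosh_pos s).le]
  have hφp := sinhRatio_pos hs hp₀
  have hφq := sinhRatio_pos hs hp₁
  calc exp s / sinhRatio s p
      = sinhRatio s (1 - p) * (exp s / (sinhRatio s p * sinhRatio s (1 - p))) := by field_simp
    _ ≤ _ := by
      refine mul_le_mul_of_nonneg_right (sinhRatio_le_rpow_cosh hE₀ ?_) (by positivity)
      push_cast
      nlinarith [sq_nonneg p]
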